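/- An ordering of {x_1,...,x_n} is a cherry-picking sequence for the caterpillar (x_1,...,x_n) if and only if, for every k in {3,...,n}, the element x_k appears in the ordering after at least k-2 of the elements x_1,...,x_{k-1}. -/

import Mathlib

/-- A rooted binary tree with labeled leaves. -/
inductive PhyloTree (α : Type) where
  | leaf (a : α) : PhyloTree α
  | node (l r : PhyloTree α) : PhyloTree α
deriving DecidableEq

namespace PhyloTree

variable {α : Type} [DecidableEq α]

/-- The list of leaf labels, left to right. -/
def leafList : PhyloTree α → List α
  | leaf a => [a]
  | node l r => leafList l ++ leafList r

/-- A tree is a (valid) phylogenetic tree if its leaf labels are pairwise distinct. -/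
def Phylo (T : PhyloTree α) : Prop := T.leafList.Nodup

/-- `{a,b}` is a cherry of `T`: `a` and `b` are leaves adjacent to a common parent. -/
def HasCherry : PhyloTree α → α → α → Prop
  | leaf _, _, _ => False
  | node (leaf x) (leaf y), a, b => (a = x ∧ b = y) ∨ (a = y ∧ b = x)
  | node l r, a, b => HasCherry l a b ∨ HasCherry r a b

/-- `a` is a leaf of a cherry of `T`. -/
def IsCherryLeaf (T : PhyloTree α) (a : α) : Prop := ∃ b, HasCherry T a b

/-- The number of cherries of `T`. -/
def numCherries : PhyloTree α → ℕ
  | leaf _ => 0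
  | node (leaf _) (leaf _) => 1
  | node l r => numCherries l + numCherries r

/-- Delete the leaf labeled `a` and suppress the resulting degree-2 vertex. -/
def delete : PhyloTree α → α → PhyloTree α
  | leaf b, _ => leaf b
  | node l r, a =>
    if l = leaf a then r
    else if r = leaf a then l
    else node (delete l a) (delete r a)

/-- Delete a list of leaves in order. -/
def deleteAll (T : PhyloTree α) (xs : List α) : PhyloTree α := xs.foldl delete T

/-- `(x_1,…,x_n)` is a cherry-picking sequence for the collection `P`:
each `x_i` except possibly the last labels a leaf of a cherry in every tree of
`P` after the deletion of `x_1,…,x_{i-1}`. -/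
def IsCPS (P : List (PhyloTree α)) (xs : List α) : Prop :=
  ∀ T ∈ P, ∀ i : Fin xs.length, (i : ℕ) < xs.length - 1 →
    IsCherryLeaf (deleteAll T (xs.take i)) (xs.get i)

/-- The collection `P` of trees (on a common leaf set) has a cherry-picking sequence. -/
def HasCPS (P : List (PhyloTree α)) : Prop :=
  ∃ xs : List α, (∀ T ∈ P, xs.Perm T.leafList) ∧ IsCPS P xs

/-- The caterpillar `(a, b, c_1, …, c_k)` with cherry `{a,b}`. -/
def caterpillar (a b : α) (cs : List α) : PhyloTree α :=
  cs.foldl (fun t c => node t (leaf c)) (node (leaf a) (leaf b))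

/-- Number of leaves. -/
def numLeaves : PhyloTree α → ℕ
  | leaf _ => 1
  | node l r => numLeaves l + numLeaves r

/-- Number of vertices. -/
def numVertices : PhyloTree α → ℕ
  | leaf _ => 1
  | node l r => numVertices l + numVertices r + 1

end PhyloTree

namespace PhyloTree
variable {α : Type} [DecidableEq α]
set_option linter.unusedSectionVars false

/-! Auxiliary -/

def cat (u : α) (L : List α) : PhyloTree α :=
  L.foldl (fun t c => node t (leaf c)) (leaf u)

lemma cat_cons (u v : α) (L : List α) : cat u (v :: L) = caterpillar u v L := rfl

lemma cat_append (u : α) (L : List α) (c : α) :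
    cat u (L ++ [c]) = node (cat u L) (leaf c) := by
  simp [cat, List.foldl_append]

lemma cat_cons_isNode (u v : α) (L : List α) :
    ∃ l r, cat u (v :: L) = node l r := by
  induction L using List.reverseRecOn with
  | nil => exact ⟨leaf u, leaf v, rfl⟩
  | append_singleton M c ih =>
      refine ⟨cat u (v :: M), leaf c, ?_⟩
      rw [show v :: (M ++ [c]) = (v :: M) ++ [c] by simp, cat_append]

lemma hasCherry_cat (u v : α) (L : List α) (x y : α) :
    HasCherry (cat u (v :: L)) x y ↔ (x = u ∧ y = v) ∨ (x = v ∧ y = u) := by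
  induction L using List.reverseRecOn with
  | nil => simp [cat, HasCherry]
  | append_singleton M c ih =>
      rw [show v :: (M ++ [c]) = (v :: M) ++ [c] by simp, cat_append]
      obtain ⟨l, r, h⟩ := cat_cons_isNode u v M
      rw [h] at ih ⊢
      simp [HasCherry, ih]

end PhyloTree

namespace PhyloTree
variable {α : Type} [DecidableEq α]
set_option linter.unusedSectionVars false

lemma delete_leaf (bb : α) (x : α) : delete (leaf bb) x = leaf bb := rfl

lemma delete_node (l r : PhyloTree α) (x : α) :
    delete (node l r) x =
      if l = leaf x then r else if r = leaf x then l
      else node (delete l x) (delete r x) := rfl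

lemma delete_cat (u v : α) (L : List α) (h : (u :: v :: L).Nodup) (x : α) :
    delete (cat u (v :: L)) x =
      if x = u then cat v L else if x = v then cat u L
      else cat u (v :: L.erase x) := by
  induction L using List.reverseRecOn with
  | nil =>
      have huv : u ≠ v := by simp at h; tauto
      rw [show cat u [v] = node (leaf u) (leaf v) from rfl, delete_node]
      by_cases h1 : x = u
      · rw [if_pos (by rw [h1]), if_pos h1]
        rfl
      · rw [if_neg (by simp [Ne.symm h1]), if_neg h1]
        by_cases h2 : x = v
        · rw [if_pos (by rw [h2]), if_pos h2]
          rfl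
        · rw [if_neg (by simp [Ne.symm h2]), if_neg h2, delete_leaf, delete_leaf]
          simp [List.erase_cons, h2, cat]
  | append_singleton M c ih =>
      have h' : (u :: v :: M).Nodup := by
        refine List.Nodup.sublist ?_ h
        refine List.cons_sublist_cons.mpr (List.cons_sublist_cons.mpr ?_)
        simp
      have h2 := h
      simp only [List.nodup_cons, List.nodup_append, List.mem_append,
        List.mem_cons, List.mem_singleton, List.nodup_singleton,
        List.disjoint_singleton, not_or] at h2
      have hcu : c ≠ u := by tauto
      have hcv : c ≠ v := by tauto
      have hcM : c ∉ M := by tauto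
      rw [show v :: (M ++ [c]) = (v :: M) ++ [c] by simp, cat_append]
      obtain ⟨l, r, hn⟩ := cat_cons_isNode u v M
      have hne : cat u (v :: M) ≠ leaf x := by rw [hn]; intro hh; cases hh
      rw [delete_node, if_neg hne]
      by_cases hxc : x = c
      · rw [if_pos (by rw [hxc]), if_neg (by rw [hxc]; exact hcu),
          if_neg (by rw [hxc]; exact hcv)]
        rw [List.erase_append_right _ (by rw [hxc]; exact hcM)]
        rw [show [c].erase x = [] by rw [hxc]; simp]
        simp
      · rw [if_neg (by simp [Ne.symm hxc]), delete_leaf, ih h']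
        split_ifs with h1 h2
        · rw [← cat_append]
        · rw [← cat_append]
        · rw [← cat_append]
          congr 1
          by_cases hxM : x ∈ M
          · rw [List.erase_append_left _ hxM]
            simp
          · rw [List.erase_append_right _ hxM, List.erase_of_not_mem hxM]
            simp [List.erase_cons, hxc]
            exact fun hh => hxc hh.symm

end PhyloTree

namespace PhyloTree
variable {α : Type} [DecidableEq α]
set_option linter.unusedSectionVars false

def catl [Inhabited α] : List α → PhyloTree α
  | [] => leaf default
  | u :: L => cat u L

lemma delete_catl [Inhabited α] {L : List α} (h : L.Nodup) (h2 : 2 ≤ L.length)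
    (x : α) : delete (catl L) x = catl (L.erase x) := by
  match L, h2 with
  | u :: v :: M, _ =>
    show delete (cat u (v :: M)) x = _
    rw [delete_cat u v M h x]
    split_ifs with h1 h2'
    · subst h1; simp [List.erase_cons, catl]
    · subst h2'
      have : u ≠ x := by simp at h; tauto
      simp [List.erase_cons, this, catl]
    · have hu : u ≠ x := fun hh => h1 hh.symm
      have hv : v ≠ x := fun hh => h2' hh.symm
      simp [List.erase_cons, hu, hv, catl]

lemma erase_filter_not_mem (L : List α) (hL : L.Nodup) (y : α) (ys : List α) :
    (L.erase y).filter (fun z => decide (z ∉ ys))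
      = L.filter (fun z => decide (z ∉ y :: ys)) := by
  rw [List.Nodup.erase_eq_filter hL, List.filter_filter]
  apply List.filter_congr
  intro z _
  by_cases h1 : z = y <;> by_cases h2 : z ∈ ys <;> simp [h1, h2]

lemma deleteAll_catl [Inhabited α] (ys : List α) : ∀ (L : List α), L.Nodup →
    2 ≤ (L.filter (fun z => decide (z ∉ ys))).length →
    deleteAll (catl L) ys = catl (L.filter (fun z => decide (z ∉ ys))) := by
  induction ys with
  | nil =>
      intro L _ _
      simp [deleteAll]
  | cons y ys ih =>
      intro L hL h2
      have hlen : 2 ≤ L.length := by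
        calc 2 ≤ _ := h2
        _ ≤ L.length := List.length_filter_le _ _
      show deleteAll (delete (catl L) y) ys = _
      rw [delete_catl hL hlen y]
      rw [ih (L.erase y) (hL.erase y)
        (by rw [erase_filter_not_mem L hL y ys]; exact h2)]
      rw [erase_filter_not_mem L hL y ys]

lemma isCherryLeaf_catl [Inhabited α] (u v : α) (M : List α) (x : α) :
    IsCherryLeaf (catl (u :: v :: M)) x ↔ x = u ∨ x = v := by
  show IsCherryLeaf (cat u (v :: M)) x ↔ _
  constructor
  · rintro ⟨bb, hb⟩
    rw [hasCherry_cat] at hb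
    tauto
  · rintro (rfl | rfl)
    · exact ⟨v, (hasCherry_cat _ _ _ _ _).mpr (Or.inl ⟨rfl, rfl⟩)⟩
    · exact ⟨u, (hasCherry_cat _ _ _ _ _).mpr (Or.inr ⟨rfl, rfl⟩)⟩

end PhyloTree

section ListLemmas
variable {α : Type} [DecidableEq α]

lemma indexOf_filter_aux (p : α → Bool) : ∀ (L : List α), L.Nodup → ∀ y ∈ L, p y = true →
    (L.filter p).idxOf y = ((L.take (L.idxOf y)).filter p).length := by
  intro L
  induction L with
  | nil => intro _ y hy; simp at hy
  | cons z L' ih =>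
      intro hnd y hy hpy
      by_cases hzy : z = y
      · subst hzy
        rw [List.idxOf_cons_self]
        simp [List.filter_cons, hpy]
      · have hyL : y ∈ L' := by
          rcases List.mem_cons.mp hy with h | h
          · exact absurd h.symm hzy
          · exact h
        have hidx : (z :: L').idxOf y = L'.idxOf y + 1 := by
          rw [List.idxOf_cons_ne _ hzy, Nat.succ_eq_add_one]
        rw [hidx]
        rw [List.take_succ_cons]
        by_cases hpz : p z = true
        · rw [List.filter_cons_of_pos hpz, List.filter_cons_of_pos hpz]
          rw [List.idxOf_cons_ne _ hzy, Nat.succ_eq_add_one]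
          rw [ih hnd.of_cons y hyL hpy]
          simp
        · rw [List.filter_cons_of_neg hpz, List.filter_cons_of_neg hpz]
          exact ih hnd.of_cons y hyL hpy

lemma mem_take_iff_indexOf : ∀ (L : List α) (m : ℕ) (x : α), x ∈ L →
    (x ∈ L.take m ↔ L.idxOf x < m) := by
  intro L
  induction L with
  | nil => intro m x hx; simp at hx
  | cons z L' ih =>
      intro m x hx
      cases m with
      | zero => simp
      | succ m =>
          rw [List.take_succ_cons]
          by_cases hzx : x = z
          · subst hzx
            simp [List.idxOf_cons_self]
          · have hxL : x ∈ L' := by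
              rcases List.mem_cons.mp hx with h | h
              · exact absurd h hzx
              · exact h
            rw [List.idxOf_cons_ne _ (fun hh => hzx hh.symm), Nat.succ_eq_add_one]
            simp only [List.mem_cons, hzx, false_or]
            rw [ih m x hxL]
            omega

end ListLemmas

section MoreListLemmas
variable {α : Type} [DecidableEq α]

lemma length_filter_not_add (S : List α) (q : α → Prop) [DecidablePred q] :
    (S.filter (fun z => decide ¬ q z)).length
      + (S.filter (fun z => decide (q z))).length = S.length := by
  induction S with
  | nil => simp
  | cons z S ih =>
      by_cases hq : q z <;>
        simp [List.filter_cons, hq, ← ih] <;> omega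

end MoreListLemmas

lemma exists_cons_cons_of_two_le {α : Type} {L : List α} (h : 2 ≤ L.length) :
    ∃ u v M, L = u :: v :: M := by
  match L, h with
  | u :: v :: M, _ => exact ⟨u, v, M, rfl⟩


open PhyloTree in
/-- Characterization of the cherry-picking sequences of a caterpillar
`(x_1,…,x_n)`: an ordering `xs` of `{x_1,…,x_n}` is a cherry-picking sequence
for the caterpillar if and only if for every `k ∈ {3,…,n}`, the element `x_k`
appears in `xs` after at least `k-2` of the elements `x_1,…,x_{k-1}`. -/
theorem caterpillar_cps_characterization {α : Type} [DecidableEq α]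
    (a b : α) (cs : List α) (hnd : (a :: b :: cs).Nodup)
    (xs : List α) (hperm : xs.Perm (a :: b :: cs)) :
    IsCPS [caterpillar a b cs] xs ↔
      ∀ (k : ℕ) (hk : 3 ≤ k) (hkl : k ≤ (a :: b :: cs).length),
        k - 2 ≤ (((a :: b :: cs).take (k - 1)).filter
            (fun y => decide (xs.idxOf y <
              xs.idxOf ((a :: b :: cs).get ⟨k - 1, by omega⟩)))).length := by

  letI : Inhabited α := ⟨a⟩
  have hx : xs.Nodup := hperm.nodup_iff.mpr hnd
  have hlen : xs.length = (a :: b :: cs).length := hperm.length_eq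
  have hmemL : ∀ z : α, z ∈ (a :: b :: cs) → z ∈ xs :=
    fun z hz => hperm.mem_iff.mpr hz
  have hRlen : ∀ i : ℕ,
      ((a :: b :: cs).filter (fun z => decide (z ∉ xs.take i))).length
        = xs.length - i := by
    intro i
    have h1 : ((a :: b :: cs).filter (fun z => decide (z ∉ xs.take i))).length
        = (xs.filter (fun z => decide (z ∉ xs.take i))).length :=
      ((hperm.filter _).symm).length_eq
    rw [h1]
    have h2 : xs.filter (fun z => decide (z ∉ xs.take i))
        = (xs.take i).filter (fun z => decide (z ∉ xs.take i))
          ++ (xs.drop i).filter (fun z => decide (z ∉ xs.take i)) := by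
      rw [← List.filter_append, List.take_append_drop]
    have hd : (xs.take i).Disjoint (xs.drop i) := by
      apply List.disjoint_of_nodup_append
      rw [List.take_append_drop]; exact hx
    have hA : (xs.take i).filter (fun z => decide (z ∉ xs.take i)) = [] :=
      List.filter_eq_nil_iff.mpr (fun z hz => by simp [hz])
    have hB : (xs.drop i).filter (fun z => decide (z ∉ xs.take i)) = xs.drop i :=
      List.filter_eq_self.mpr (fun z hz => by
        simp only [decide_eq_true_eq]
        exact fun hmem => hd hmem hz)
    rw [h2, hA, hB]
    simp
  have hRidx : ∀ y ∈ (a :: b :: cs), ∀ i : ℕ, y ∉ xs.take i →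
      ((a :: b :: cs).filter (fun z => decide (z ∉ xs.take i))).idxOf y
        = (((a :: b :: cs).take ((a :: b :: cs).idxOf y)).filter
            (fun z => decide (z ∉ xs.take i))).length := by
    intro y hy i hyi
    exact indexOf_filter_aux _ _ hnd y hy (by simp [hyi])
  have hcongr : ∀ (S : List α), (∀ z ∈ S, z ∈ xs) → ∀ i : ℕ,
      S.filter (fun z => decide (xs.idxOf z < i))
        = S.filter (fun z => decide (z ∈ xs.take i)) := by
    intro S hS i
    apply List.filter_congr
    intro z hz
    rw [decide_eq_decide]
    exact (mem_take_iff_indexOf xs i z (hS z hz)).symm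
  constructor
  · -- forward direction
    intro hcps k hk hkl
    have hkL : k - 1 < (a :: b :: cs).length := by omega
    show k - 2 ≤ (((a :: b :: cs).take (k - 1)).filter
        (fun z => decide (xs.idxOf z <
          xs.idxOf ((a :: b :: cs).get ⟨k - 1, hkL⟩)))).length
    set y := (a :: b :: cs).get ⟨k - 1, hkL⟩ with hydef
    have hyL : y ∈ (a :: b :: cs) := List.get_mem _ _
    have hyxs : y ∈ xs := hmemL _ hyL
    have hj : (a :: b :: cs).idxOf y = k - 1 := List.get_idxOf hnd _
    have iy_lt : xs.idxOf y < xs.length := List.idxOf_lt_length_iff.mpr hyxs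
    by_cases hlast : xs.idxOf y < xs.length - 1
    · -- apply the CPS hypothesis
      have hcps' : IsCherryLeaf
          (deleteAll (caterpillar a b cs) (xs.take (xs.idxOf y)))
          (xs.get ⟨xs.idxOf y, iy_lt⟩) :=
        hcps (caterpillar a b cs) (by simp) ⟨xs.idxOf y, iy_lt⟩ hlast
      rw [List.idxOf_get iy_lt] at hcps'
      have h2R : 2 ≤ ((a :: b :: cs).filter
          (fun z => decide (z ∉ xs.take (xs.idxOf y)))).length := by
        rw [hRlen]; omega
      rw [show caterpillar a b cs = catl (a :: b :: cs) from rfl,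
        deleteAll_catl _ _ hnd h2R] at hcps'
      obtain ⟨r0, r1, M, hR⟩ := exists_cons_cons_of_two_le h2R
      have hyinpre : y ∉ xs.take (xs.idxOf y) := by
        intro hm
        have := (mem_take_iff_indexOf xs _ y hyxs).mp hm
        omega
      have hidxR : ((a :: b :: cs).filter
          (fun z => decide (z ∉ xs.take (xs.idxOf y)))).idxOf y ≤ 1 := by
        rw [hR]
        rw [hR, isCherryLeaf_catl] at hcps'
        by_cases h0 : r0 = y
        · rw [← h0, List.idxOf_cons_self]; omega
        · rw [List.idxOf_cons_ne _ h0]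
          rcases hcps' with h | h
          · exact absurd h.symm h0
          · rw [← h, List.idxOf_cons_self]
      rw [hRidx y hyL (xs.idxOf y) hyinpre, hj] at hidxR
      have hsplit := length_filter_not_add ((a :: b :: cs).take (k - 1))
        (fun z => z ∈ xs.take (xs.idxOf y))
      have hcongr' := hcongr ((a :: b :: cs).take (k - 1))
        (fun z hz => hmemL z (List.mem_of_mem_take hz)) (xs.idxOf y)
      have htl : ((a :: b :: cs).take (k - 1)).length = k - 1 := by
        rw [List.length_take]; omega
      rw [hcongr']
      omega
    · -- y is last in xs
      have hall : ∀ z ∈ (a :: b :: cs).take (k - 1),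
          (fun z => decide (xs.idxOf z < xs.idxOf y)) z = true := by
        intro z hz
        have hzL : z ∈ (a :: b :: cs) := List.mem_of_mem_take hz
        have hzxs : z ∈ xs := hmemL z hzL
        have h1 : xs.idxOf z < xs.length := List.idxOf_lt_length_iff.mpr hzxs
        have hzy : z ≠ y := by
          have hzlt : (a :: b :: cs).idxOf z < k - 1 :=
            (mem_take_iff_indexOf _ _ z hzL).mp hz
          intro he
          rw [he, hj] at hzlt
          omega
        have hne : xs.idxOf z ≠ xs.idxOf y := by
          intro he
          apply hzy
          have e1 := List.idxOf_get h1
          have e2 := List.idxOf_get iy_lt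
          rw [← e1, ← e2]
          congr 1
          exact Fin.ext he
        simp only [decide_eq_true_eq]
        omega
      rw [List.filter_eq_self.mpr hall, List.length_take]
      omega
  · -- backward direction
    intro H T hT i hi
    rw [List.mem_singleton] at hT
    subst hT
    set y := xs.get i with hydef
    have hyxs : y ∈ xs := List.get_mem _ _
    have hyL : y ∈ (a :: b :: cs) := hperm.mem_iff.mp hyxs
    have hiy : xs.idxOf y = (i : ℕ) := List.get_idxOf hx i
    have h2R : 2 ≤ ((a :: b :: cs).filter
        (fun z => decide (z ∉ xs.take (i : ℕ)))).length := by
      rw [hRlen]; omega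
    rw [show caterpillar a b cs = catl (a :: b :: cs) from rfl,
      deleteAll_catl _ _ hnd h2R]
    obtain ⟨r0, r1, M, hR⟩ := exists_cons_cons_of_two_le h2R
    have hyinpre : y ∉ xs.take (i : ℕ) := by
      intro hm
      have := (mem_take_iff_indexOf xs _ y hyxs).mp hm
      omega
    have hyR : y ∈ (a :: b :: cs).filter
        (fun z => decide (z ∉ xs.take (i : ℕ))) :=
      List.mem_filter.mpr ⟨hyL, by simp [hyinpre]⟩
    have hjlt : (a :: b :: cs).idxOf y < (a :: b :: cs).length :=
      List.idxOf_lt_length_iff.mpr hyL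
    have hbound : ((a :: b :: cs).filter
        (fun z => decide (z ∉ xs.take (i : ℕ)))).idxOf y ≤ 1 := by
      rw [hRidx y hyL (i : ℕ) hyinpre]
      by_cases hj1 : (a :: b :: cs).idxOf y ≤ 1
      · calc (((a :: b :: cs).take ((a :: b :: cs).idxOf y)).filter
              (fun z => decide (z ∉ xs.take (i : ℕ)))).length
            ≤ ((a :: b :: cs).take ((a :: b :: cs).idxOf y)).length :=
              List.length_filter_le _ _
          _ ≤ (a :: b :: cs).idxOf y := by
              rw [List.length_take]; omega
          _ ≤ 1 := hj1
      · set j := (a :: b :: cs).idxOf y with hjdef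
        have hk := H (j + 1) (by omega) (by omega)
        simp only [Nat.add_sub_cancel] at hk
        have hgy : (a :: b :: cs).get ⟨j, hjlt⟩ = y := List.idxOf_get hjlt
        rw [hgy] at hk
        rw [hcongr ((a :: b :: cs).take j)
          (fun z hz => hmemL z (List.mem_of_mem_take hz)) (xs.idxOf y)] at hk
        rw [hiy] at hk
        have hsplit := length_filter_not_add ((a :: b :: cs).take j)
          (fun z => z ∈ xs.take (i : ℕ))
        have htl : ((a :: b :: cs).take j).length = j := by
          rw [List.length_take]; omega
        omega
    rw [hR] at hyR hbound
    rw [hR, isCherryLeaf_catl]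
    by_cases h0 : y = r0
    · exact Or.inl h0
    · right
      rw [List.idxOf_cons_ne _ (fun hh => h0 hh.symm)] at hbound
      by_cases h1 : y = r1
      · exact h1
      · exfalso
        rw [List.idxOf_cons_ne _ (fun hh => h1 hh.symm)] at hbound
        omega
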